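/- For every y ∈ R^m with ∇f_R(y)[i] ≠ 0 for all i and y not a solution (P_A(y) ≠ P_B(y)), there exists β > 0 such that f_R(y − β∇f_R(y)) > 0. -/

import Mathlib

/-!
Put `d = ∇f_R(y)`. Once `β` exceeds every `|yᵢ| / |dᵢ|`, the signs of `y - β d` are those of
`-d`, so `P_B(y - β d) = -P_B(d)` stays fixed. On that ray `f_R` is then a real quadratic in `β`
with leading coefficient `½‖P_A d‖²`, and if `P_A d = 0` its linear coefficient is
`⟪d, P_B d⟫ = ∑ bᵢ |dᵢ| > 0`. Either way `f_R(y - β d) → ∞`.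
-/

open scoped RealInnerProductSpace
open Filter

lemma tendsto_quadratic_atTop {a b : ℝ} (c : ℝ) (h : 0 < a ∨ a = 0 ∧ 0 < b) :
    Tendsto (fun t : ℝ => a * t ^ 2 + b * t + c) atTop atTop := by
  refine tendsto_atTop_add_const_right _ c ?_
  rcases h with ha | ⟨rfl, hb⟩
  · have hlin : Tendsto (fun t : ℝ => a * t + b) atTop atTop :=
      tendsto_atTop_add_const_right _ b (tendsto_id.const_mul_atTop ha)
    refine (tendsto_id.atTop_mul_atTop₀ hlin).congr fun t => ?_
    simp only [id]
    ring
  · simpa using tendsto_id.const_mul_atTop hb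

lemma eventually_sign_sub_mul_eq_neg_sign (u : ℝ) {v : ℝ} (hv : v ≠ 0) :
    ∀ᶠ t in atTop, Real.sign (u - t * v) = -Real.sign v := by
  filter_upwards [eventually_gt_atTop (|u| / |v|)] with t ht
  rw [div_lt_iff₀ (abs_pos.2 hv)] at ht
  rcases hv.lt_or_gt with hv | hv
  · rw [abs_of_neg hv] at ht
    rw [Real.sign_of_neg hv, Real.sign_of_pos (by nlinarith [neg_abs_le u]), neg_neg]
  · rw [abs_of_pos hv] at ht
    rw [Real.sign_of_pos hv, Real.sign_of_neg (by nlinarith [le_abs_self u])]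

section WeightedSign

variable {ι : Type*} [Fintype ι] {b : ι → ℝ} {PB : EuclideanSpace ℝ ι → EuclideanSpace ℝ ι}

lemma eventually_weightedSign_sub_smul (hPB : ∀ y i, PB y i = b i * Real.sign (y i))
    (y : EuclideanSpace ℝ ι) {d : EuclideanSpace ℝ ι} (hd : ∀ i, d i ≠ 0) :
    ∀ᶠ β : ℝ in atTop, PB (y - β • d) = -PB d := by
  filter_upwards [eventually_all.2 fun i => eventually_sign_sub_mul_eq_neg_sign (y i) (hd i)]
    with β hβ
  ext i
  simp [hPB, hβ i]

lemma inner_weightedSign_pos (hb : ∀ i, 0 < b i) (hPB : ∀ y i, PB y i = b i * Real.sign (y i))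
    {d : EuclideanSpace ℝ ι} (hd : d ≠ 0) : 0 < ⟪d, PB d⟫ := by
  obtain ⟨j, hj⟩ : ∃ j, d j ≠ 0 := by
    by_contra! h
    exact hd (PiLp.ext h)
  simp only [PiLp.inner_apply, RCLike.inner_apply, conj_trivial, hPB, mul_assoc]
  refine Finset.sum_pos' (fun i _ => ?_) ⟨j, Finset.mem_univ j, ?_⟩
  · exact mul_nonneg (hb i).le (Real.sign_mul_nonneg _)
  · exact mul_pos (hb j) (Real.sign_mul_pos_of_ne_zero _ hj)

end WeightedSign

section OrthogonalProjection

variable {E : Type*} [NormedAddCommGroup E] [InnerProductSpace ℝ E] {PA : E →ₗ[ℝ] E}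

lemma objective_sub_smul_eq_quadratic (hidem : ∀ x, PA (PA x) = PA x)
    (hsa : ∀ x z, ⟪PA x, z⟫ = ⟪x, PA z⟫) (w y d : E) (β : ℝ) :
    ‖y - β • d - PA w‖ ^ 2 - (1 / 2) * (‖y - β • d - PA (y - β • d)‖ ^ 2 + ‖y - β • d - w‖ ^ 2)
      = (1 / 2) * ‖PA d‖ ^ 2 * β ^ 2 + (2 * ⟪PA d, w⟫ - ⟪PA y, PA d⟫ - ⟪d, w⟫) * β
        + (‖y - PA w‖ ^ 2 - (1 / 2) * (‖y - PA y‖ ^ 2 + ‖y - w‖ ^ 2)) := by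
  have hsymm : ∀ x z, ⟪x, PA z⟫ = ⟪z, PA x⟫ := fun x z => by rw [← hsa, real_inner_comm]
  simp only [← real_inner_self_eq_norm_sq, map_sub, map_smul, inner_sub_left, inner_sub_right,
    real_inner_smul_left, real_inner_smul_right, hsa, hidem]
  rw [hsymm y d, hsymm y w, hsymm d w, real_inner_comm y d, real_inner_comm y w,
    real_inner_comm d w]
  ring

lemma tendsto_objective_sub_smul_atTop (hidem : ∀ x, PA (PA x) = PA x)
    (hsa : ∀ x z, ⟪PA x, z⟫ = ⟪x, PA z⟫) (w y : E) {d : E} (hd : PA d ≠ 0 ∨ ⟪d, w⟫ < 0) :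
    Tendsto (fun β : ℝ => ‖y - β • d - PA w‖ ^ 2
      - (1 / 2) * (‖y - β • d - PA (y - β • d)‖ ^ 2 + ‖y - β • d - w‖ ^ 2)) atTop atTop := by
  simp only [objective_sub_smul_eq_quadratic hidem hsa]
  refine tendsto_quadratic_atTop _ ?_
  by_cases hPAd : PA d = 0
  · simp only [hPAd, norm_zero, inner_zero_left, inner_zero_right]
    exact Or.inr ⟨by ring, by linarith [hd.resolve_left (not_not.2 hPAd)]⟩
  · exact Or.inl (by positivity)

end OrthogonalProjection

/-- For any `y` with nonvanishing gradient coordinates which is not a solution,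
a large enough step along the negative gradient makes `f_R` positive. -/
theorem fR_positive_along_gradient {m : ℕ}
    (b : Fin m → ℝ) (hb : ∀ i, 0 < b i)
    (PA : EuclideanSpace ℝ (Fin m) →ₗ[ℝ] EuclideanSpace ℝ (Fin m))
    (hidem : ∀ x, PA (PA x) = PA x)
    (hsa : ∀ x z, ⟪PA x, z⟫ = ⟪x, PA z⟫)
    (PB : EuclideanSpace ℝ (Fin m) → EuclideanSpace ℝ (Fin m))
    (hPB : ∀ y i, PB y i = b i * Real.sign (y i))
    (fR : EuclideanSpace ℝ (Fin m) → ℝ)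
    (hfR : ∀ y, fR y = ‖y - PA (PB y)‖ ^ 2
      - (1 / 2) * (‖y - PA y‖ ^ 2 + ‖y - PB y‖ ^ 2))
    (y : EuclideanSpace ℝ (Fin m))
    (hgradnz : ∀ i, (PA y + PB y - (2 : ℝ) • PA (PB y)) i ≠ 0)
    (hnotsol : PA y ≠ PB y) :
    ∃ β > (0 : ℝ), 0 < fR (y - β • (PA y + PB y - (2 : ℝ) • PA (PB y))) := by
  set d := PA y + PB y - (2 : ℝ) • PA (PB y)
  -- In dimension zero every vector is a solution.
  obtain ⟨i⟩ : Nonempty (Fin m) := by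
    by_contra h
    exact hnotsol (PiLp.ext fun i => (h ⟨i⟩).elim)
  have hd : d ≠ 0 := fun h => hgradnz i (by rw [h]; rfl)
  have hdescent : ⟪d, -PB d⟫ < 0 := by
    rw [inner_neg_right, neg_lt_zero]
    exact inner_weightedSign_pos hb hPB hd
  have hescape := tendsto_objective_sub_smul_atTop hidem hsa (-PB d) y (Or.inr hdescent)
  obtain ⟨β, hβ, hpos, hPBβ⟩ := ((eventually_gt_atTop 0).and
    ((hescape.eventually_gt_atTop 0).and (eventually_weightedSign_sub_smul hPB y hgradnz))).exists
  exact ⟨β, hβ, by rwa [hfR, hPBβ]⟩
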